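/- arXiv:2306.09837 — 2 statements merged into one kernel-verified Lean document; each statement's English description precedes it below -/
import Mathlib

section
/- Let A be a closed operator on a Banach space X and suppose there are ω ∈ ℝ and N₀ > 0 such that every λ with Re λ ≥ ω lies in ρ(A) and ‖λ R(λ,A)‖ ≤ N₀ there. Then with τ = π − arctan(2N₀) ∈ (π/2, π), the sector Ω_{ω,τ} is contained in ρ(A) and ‖R(λ,A)‖ ≤ √(4N₀² + 1)/|λ − ω| for every λ ∈ Ω_{ω,τ}. -/
set_option maxHeartbeats 1000000


open Real

/-- The open sector with vertex `a` and half-angle `θ`. -/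
def sector (a θ : ℝ) : Set ℂ := {z : ℂ | z ≠ (a : ℂ) ∧ |Complex.arg (z - (a : ℂ))| < θ}

/-- `R` is the resolvent operator `(lam - A)⁻¹` of the (possibly unbounded) operator `A`
with domain `dom` at the point `lam`. -/
structure ResolventAt {X : Type*} [NormedAddCommGroup X] [NormedSpace ℂ X]
    (dom : Set X) (A : X → X) (lam : ℂ) (R : X →L[ℂ] X) : Prop where
  mem_dom : ∀ y, R y ∈ dom
  left_inv : ∀ y, lam • R y - A (R y) = y
  right_inv : ∀ x ∈ dom, R (lam • x - A x) = x

section Aux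
variable {X : Type*} [NormedAddCommGroup X] [NormedSpace ℂ X]
  {dom : Set X} {A : X → X} {lam : ℂ}

theorem ResolventAt.eq_of {R S : X →L[ℂ] X}
    (hR : ResolventAt dom A lam R) (hS : ResolventAt dom A lam S) : R = S := by
  ext y
  have h1 := hR.right_inv (S y) (hS.mem_dom y)
  rw [hS.left_inv y] at h1
  exact h1

theorem ResolventAt.neumann [CompleteSpace X] {R₀ : X →L[ℂ] X}
    (h : ResolventAt dom A lam R₀) (c : ℂ) (hc : ‖c‖ * ‖R₀‖ < 1) :
    ResolventAt dom A (lam + c) (R₀ * Ring.inverse ((1 : X →L[ℂ] X) + c • R₀)) ∧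
      ‖R₀ * Ring.inverse ((1 : X →L[ℂ] X) + c • R₀)‖ ≤ ‖R₀‖ / (1 - ‖c‖ * ‖R₀‖) := by
  have hcR : ‖c • R₀‖ < 1 := by
    calc ‖c • R₀‖ = ‖c‖ * ‖R₀‖ := norm_smul c R₀
      _ < 1 := hc
  have ht : ‖-(c • R₀)‖ < 1 := by rwa [norm_neg]
  set u : (X →L[ℂ] X)ˣ := Units.oneSub (-(c • R₀)) ht with hu_def
  have huval : (u : X →L[ℂ] X) = 1 + c • R₀ := by
    rw [hu_def, Units.val_oneSub, sub_neg_eq_add]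
  have hinv : Ring.inverse ((1 : X →L[ℂ] X) + c • R₀) = ↑u⁻¹ := by
    rw [← huval, Ring.inverse_unit]
  set T : X →L[ℂ] X := (↑u⁻¹ : X →L[ℂ] X) with hT_def
  have hTnorm : ‖T‖ ≤ (1 - ‖c • R₀‖)⁻¹ := by
    have : T = ∑' n : ℕ, (-(c • R₀)) ^ n := rfl
    rw [this]
    have hb : ∀ n : ℕ, ‖(-(c • R₀)) ^ n‖ ≤ ‖c • R₀‖ ^ n := by
      intro n
      cases n with
      | zero => rw [pow_zero, pow_zero]; exact ContinuousLinearMap.norm_id_le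
      | succ m =>
        calc ‖(-(c • R₀)) ^ (m + 1)‖ ≤ ‖-(c • R₀)‖ ^ (m + 1) :=
              norm_pow_le' _ (Nat.succ_pos m)
          _ = ‖c • R₀‖ ^ (m + 1) := by rw [norm_neg]
    exact tsum_of_norm_bounded (hasSum_geometric_of_lt_one (norm_nonneg _) hcR) hb
  have huT : ((1 : X →L[ℂ] X) + c • R₀) * T = 1 := by rw [← huval]; exact u.mul_inv
  have hTu : T * ((1 : X →L[ℂ] X) + c • R₀) = 1 := by rw [← huval]; exact u.inv_mul
  have hcomm : R₀ * T = T * R₀ := by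
    have h1 : Commute ((u : X →L[ℂ] X)) R₀ := by
      rw [huval]
      unfold Commute SemiconjBy
      rw [add_mul, mul_add, one_mul, mul_one, smul_mul_assoc, mul_smul_comm]
    exact ((h1.units_inv_left).symm : Commute R₀ T)
  have key1 : ∀ y, T y + c • R₀ (T y) = y := by
    intro y
    have := congrArg (fun P : X →L[ℂ] X => P y) huT
    simpa [ContinuousLinearMap.mul_apply, ContinuousLinearMap.add_apply,
      ContinuousLinearMap.one_apply, ContinuousLinearMap.smul_apply] using this
  have key2 : ∀ x, T (x + c • R₀ x) = x := by
    intro x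
    have h2 := congrArg (fun P : X →L[ℂ] X => P x) hTu
    simp only [ContinuousLinearMap.mul_apply, ContinuousLinearMap.add_apply,
      ContinuousLinearMap.one_apply, ContinuousLinearMap.smul_apply] at h2
    exact h2
  rw [hinv]
  constructor
  · constructor
    · intro y
      exact h.mem_dom (T y)
    · intro y
      have hl := h.left_inv (T y)
      calc (lam + c) • (R₀ * T) y - A ((R₀ * T) y)
          = (lam • R₀ (T y) - A (R₀ (T y))) + c • R₀ (T y) := by
            rw [ContinuousLinearMap.mul_apply, add_smul]; abel
        _ = T y + c • R₀ (T y) := by rw [hl]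
        _ = y := key1 y
    · intro x hx
      have hr := h.right_inv x hx
      calc (R₀ * T) ((lam + c) • x - A x)
          = (T * R₀) ((lam • x - A x) + c • x) := by
            rw [hcomm, add_smul]; congr 1; abel
        _ = T (R₀ (lam • x - A x) + c • R₀ x) := by
            rw [ContinuousLinearMap.mul_apply, map_add, map_smul]
        _ = T (x + c • R₀ x) := by rw [hr]
        _ = x := key2 x
  · calc ‖R₀ * T‖ ≤ ‖R₀‖ * ‖T‖ := norm_mul_le _ _
      _ ≤ ‖R₀‖ * (1 - ‖c • R₀‖)⁻¹ :=
          mul_le_mul_of_nonneg_left hTnorm (norm_nonneg _)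
      _ = ‖R₀‖ / (1 - ‖c‖ * ‖R₀‖) := by rw [norm_smul c R₀, div_eq_mul_inv]

end Aux

/-- Lunardi's sectoriality criterion: if `‖λ R(λ,A)‖ ≤ N₀` on the half-plane `Re λ ≥ ω`,
then `A` is sectorial on the sector `Ω_{ω,τ}` with `τ = π − arctan(2N₀) ∈ (π/2, π)` and
`‖R(λ,A)‖ ≤ √(4N₀² + 1)/|λ − ω|` there. -/
theorem lunardi_sectoriality_criterion
    {X : Type*} [NormedAddCommGroup X] [NormedSpace ℂ X] [CompleteSpace X]
    (dom : Set X) (A : X → X)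
    (hclosed : IsClosed {p : X × X | p.1 ∈ dom ∧ p.2 = A p.1})
    (ω N₀ : ℝ) (hN₀ : 0 < N₀)
    (hA : ∀ lam : ℂ, ω ≤ lam.re → ∃ R : X →L[ℂ] X,
      ResolventAt dom A lam R ∧ ‖lam • R‖ ≤ N₀) :
    Real.pi / 2 < Real.pi - Real.arctan (2 * N₀) ∧
    Real.pi - Real.arctan (2 * N₀) < Real.pi ∧
    ∀ lam ∈ sector ω (Real.pi - Real.arctan (2 * N₀)),
      ∃ R : X →L[ℂ] X, ResolventAt dom A lam R ∧
        ‖R‖ ≤ Real.sqrt (4 * N₀ ^ 2 + 1) / ‖lam - (ω : ℂ)‖ := by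
  classical
  have hat2 : Real.arctan (2 * N₀) < Real.pi / 2 := Real.arctan_lt_pi_div_two _
  have hat0 : 0 < Real.arctan (2 * N₀) := by
    have := Real.arctan_strictMono (show (0:ℝ) < 2 * N₀ by linarith)
    rwa [Real.arctan_zero] at this
  refine ⟨by linarith, by linarith, ?_⟩
  -- the resolvent as a function of the parameter
  set F : ℂ → (X →L[ℂ] X) := fun μ =>
    if h : ∃ R : X →L[ℂ] X, ResolventAt dom A μ R then h.choose else 0 with hF_def
  have hFspec : ∀ (μ : ℂ) (R : X →L[ℂ] X), ResolventAt dom A μ R → F μ = R := by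
    intro μ R hR
    have hex : ∃ R : X →L[ℂ] X, ResolventAt dom A μ R := ⟨R, hR⟩
    simp only [hF_def, dif_pos hex]
    exact hex.choose_spec.eq_of hR
  have hFres : ∀ μ : ℂ, (∃ R : X →L[ℂ] X, ResolventAt dom A μ R) →
      ResolventAt dom A μ (F μ) := by
    intro μ hex
    obtain ⟨R, hR⟩ := hex
    rw [hFspec μ R hR]; exact hR
  -- differentiability of F wherever a resolvent exists
  have hFdiff : ∀ μ₀ : ℂ, (∃ R : X →L[ℂ] X, ResolventAt dom A μ₀ R) →
      DifferentiableAt ℂ F μ₀ := by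
    intro μ₀ hex
    have hres := hFres μ₀ hex
    have hg : DifferentiableAt ℂ
        (fun μ : ℂ => F μ₀ * Ring.inverse ((1 : X →L[ℂ] X) + (μ - μ₀) • F μ₀)) μ₀ := by
      have h1 : DifferentiableAt ℂ
          (fun μ : ℂ => (1 : X →L[ℂ] X) + (μ - μ₀) • F μ₀) μ₀ :=
        ((differentiableAt_id.sub_const μ₀).smul_const (F μ₀)).const_add 1
      have h2 : IsUnit ((1 : X →L[ℂ] X) + (μ₀ - μ₀) • F μ₀) := by simp
      exact (h1.inverse h2).const_mul (F μ₀)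
    have hev : F =ᶠ[nhds μ₀]
        fun μ : ℂ => F μ₀ * Ring.inverse ((1 : X →L[ℂ] X) + (μ - μ₀) • F μ₀) := by
      rw [Filter.eventuallyEq_iff_exists_mem]
      refine ⟨Metric.ball μ₀ (‖F μ₀‖ + 1)⁻¹, Metric.ball_mem_nhds _ (by positivity), ?_⟩
      intro μ hμ
      have hd : ‖μ - μ₀‖ * ‖F μ₀‖ < 1 := by
        rw [Metric.mem_ball, dist_eq_norm] at hμ
        have h3 : (0:ℝ) < ‖F μ₀‖ + 1 := by positivity
        calc ‖μ - μ₀‖ * ‖F μ₀‖ ≤ ‖μ - μ₀‖ * (‖F μ₀‖ + 1) := by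
              apply mul_le_mul_of_nonneg_left (by linarith) (norm_nonneg _)
          _ < (‖F μ₀‖ + 1)⁻¹ * (‖F μ₀‖ + 1) := by
              apply mul_lt_mul_of_pos_right hμ h3
          _ = 1 := inv_mul_cancel₀ (ne_of_gt h3)
      have hne := (hres.neumann (μ - μ₀) hd).1
      rw [show μ₀ + (μ - μ₀) = μ by ring] at hne
      exact hFspec μ _ hne
    exact (hev.differentiableAt_iff).mpr hg
  -- Claim A : the bound ‖(λ - ω) R(λ)‖ ≤ N₀ on the closed half-plane Re λ ≥ ω
  have claimA : ∀ lam : ℂ, ω ≤ lam.re → ‖(lam - (ω:ℂ)) • F lam‖ ≤ N₀ := by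
    intro lam hlam
    obtain ⟨R, hR, hRb⟩ := hA lam hlam
    rw [hFspec lam R hR]
    rcases eq_or_lt_of_le hlam with heq | hlt
    · -- boundary line : direct estimate
      have h2 : ‖lam - (ω:ℂ)‖ ≤ ‖lam‖ := by
        have hre0 : (lam - (ω:ℂ)).re = 0 := by
          simp [Complex.sub_re, Complex.ofReal_re, ← heq]
        calc ‖lam - (ω:ℂ)‖ = ‖lam - (ω:ℂ)‖ := rfl
          _ ≤ |(lam - (ω:ℂ)).re| + |(lam - (ω:ℂ)).im| := Complex.norm_le_abs_re_add_abs_im _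
          _ = |lam.im| := by rw [hre0]; simp [Complex.sub_im, Complex.ofReal_im]
          _ ≤ ‖lam‖ := Complex.abs_im_le_norm lam
      calc ‖(lam - (ω:ℂ)) • R‖ = ‖lam - (ω:ℂ)‖ * ‖R‖ := norm_smul (lam - (ω:ℂ)) R
        _ ≤ ‖lam‖ * ‖R‖ := mul_le_mul_of_nonneg_right h2 (norm_nonneg _)
        _ = ‖lam • R‖ := (norm_smul _ _).symm
        _ ≤ N₀ := hRb
    · -- interior : maximum principle on large half-disks
      rw [← hFspec lam R hR]
      refine le_of_forall_pos_le_add ?_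
      intro ε hε
      set K : ℝ := max (‖lam‖ + 1) (N₀ * |ω| / ε + 1) with hK_def
      have hK0 : (0:ℝ) < K :=
        lt_of_lt_of_le (by positivity) (le_max_left _ _)
      set f : ℂ → (X →L[ℂ] X) := fun μ => (μ - (ω:ℂ)) • F μ with hf_def
      set U : Set ℂ := {μ : ℂ | ω < μ.re} ∩ Metric.ball 0 K with hU_def
      have hUb : Bornology.IsBounded U :=
        Metric.isBounded_ball.subset Set.inter_subset_right
      have hclos : closure U ⊆ {μ : ℂ | ω ≤ μ.re} := by
        intro μ hμ
        have h1 : closure U ⊆ closure {μ : ℂ | ω < μ.re} :=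
          closure_mono Set.inter_subset_left
        have h2 : closure {μ : ℂ | ω < μ.re} ⊆ {μ : ℂ | ω ≤ μ.re} :=
          closure_minimal (fun x hx => (le_of_lt hx : ω ≤ x.re))
            (isClosed_le continuous_const Complex.continuous_re)
        exact h2 (h1 hμ)
      have hdiff : ∀ μ : ℂ, ω ≤ μ.re → DifferentiableAt ℂ f μ := by
        intro μ hμ
        obtain ⟨R', hR', _⟩ := hA μ hμ
        exact (differentiableAt_id.sub_const _).smul (hFdiff μ ⟨R', hR'⟩)
      have hdc : DiffContOnCl ℂ f U := by
        constructor
        · intro μ hμ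
          exact (hdiff μ (le_of_lt hμ.1)).differentiableWithinAt
        · intro μ hμ
          exact ((hdiff μ (hclos hμ)).continuousAt).continuousWithinAt
      have hhalf : closure {μ : ℂ | ω < μ.re} ⊆ {μ : ℂ | ω ≤ μ.re} :=
        closure_minimal (fun x hx => (le_of_lt hx : ω ≤ x.re))
          (isClosed_le continuous_const Complex.continuous_re)
      have hfront : ∀ z ∈ frontier U, ‖f z‖ ≤ N₀ + N₀ * |ω| / K := by
        intro z hz
        have hz' := frontier_inter_subset {μ : ℂ | ω < μ.re} (Metric.ball 0 K) hz
        have hpos : (0:ℝ) ≤ N₀ * |ω| / K := by positivity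
        rcases hz' with h | h
        · -- boundary line piece
          have hzre : ω = z.re :=
            frontier_lt_subset_eq continuous_const Complex.continuous_re h.1
          obtain ⟨R', hR', hR'b⟩ := hA z (le_of_eq hzre)
          have hfval : ‖f z‖ = ‖z - (ω:ℂ)‖ * ‖R'‖ := by
            rw [hf_def]; simp only []
            rw [hFspec z R' hR']
            exact norm_smul (z - (ω:ℂ)) R'
          have h2 : ‖z - (ω:ℂ)‖ ≤ ‖z‖ := by
            have hre0 : (z - (ω:ℂ)).re = 0 := by
              simp [Complex.sub_re, Complex.ofReal_re, ← hzre]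
            calc ‖z - (ω:ℂ)‖ = ‖z - (ω:ℂ)‖ := rfl
              _ ≤ |(z - (ω:ℂ)).re| + |(z - (ω:ℂ)).im| := Complex.norm_le_abs_re_add_abs_im _
              _ = |z.im| := by rw [hre0]; simp [Complex.sub_im, Complex.ofReal_im]
              _ ≤ ‖z‖ := Complex.abs_im_le_norm z
          have h3 : ‖f z‖ ≤ N₀ := by
            rw [hfval]
            calc ‖z - (ω:ℂ)‖ * ‖R'‖ ≤ ‖z‖ * ‖R'‖ :=
                  mul_le_mul_of_nonneg_right h2 (norm_nonneg _)
              _ = ‖z • R'‖ := (norm_smul z R').symm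
              _ ≤ N₀ := hR'b
          linarith
        · -- circular arc piece
          have hzre : ω ≤ z.re := hhalf h.1
          have hzK : ‖z‖ = K := by
            have h4 : z ∈ Metric.sphere (0:ℂ) K := by
              rw [← frontier_ball (0:ℂ) (ne_of_gt hK0)]; exact h.2
            rw [Metric.mem_sphere, dist_zero_right] at h4
            exact h4
          obtain ⟨R', hR', hR'b⟩ := hA z hzre
          have hfval : ‖f z‖ = ‖z - (ω:ℂ)‖ * ‖R'‖ := by
            rw [hf_def]; simp only []
            rw [hFspec z R' hR']
            exact norm_smul (z - (ω:ℂ)) R'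
          have hR'n : ‖R'‖ ≤ N₀ / K := by
            rw [le_div_iff₀ hK0, mul_comm]
            calc K * ‖R'‖ = ‖z‖ * ‖R'‖ := by rw [← hzK]
              _ = ‖z • R'‖ := (norm_smul z R').symm
              _ ≤ N₀ := hR'b
          have h2 : ‖z - (ω:ℂ)‖ ≤ K + |ω| := by
            calc ‖z - (ω:ℂ)‖ ≤ ‖z‖ + ‖(ω:ℂ)‖ := norm_sub_le _ _
              _ = K + |ω| := by rw [Complex.norm_real, Real.norm_eq_abs, ← hzK]
          rw [hfval]
          calc ‖z - (ω:ℂ)‖ * ‖R'‖ ≤ (K + |ω|) * (N₀ / K) :=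
                mul_le_mul h2 hR'n (norm_nonneg _) (by positivity)
            _ = N₀ + N₀ * |ω| / K := by field_simp
      have hlamU : lam ∈ closure U := by
        apply subset_closure
        refine ⟨hlt, ?_⟩
        rw [Metric.mem_ball, dist_zero_right]
        calc ‖lam‖ = ‖lam‖ := rfl
          _ < ‖lam‖ + 1 := lt_add_one _
          _ ≤ K := le_max_left _ _
      have hmax := Complex.norm_le_of_forall_mem_frontier_norm_le hUb hdc hfront hlamU
      have hKe : N₀ * |ω| / K ≤ ε := by
        rw [div_le_iff₀ hK0]
        have h1 : N₀ * |ω| / ε + 1 ≤ K := le_max_right _ _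
        have h2 : N₀ * |ω| ≤ K * ε := by
          calc N₀ * |ω| = N₀ * |ω| / ε * ε := by field_simp
            _ ≤ K * ε := mul_le_mul_of_nonneg_right (by linarith) (le_of_lt hε)
        linarith [mul_comm K ε, h2]
      have hgoal : ‖(lam - (ω:ℂ)) • F lam‖ = ‖f lam‖ := by rw [hf_def]
      rw [hgoal]
      linarith
  -- from Claim A : the resolvent bound on the closed half-plane
  have claimA' : ∀ lam : ℂ, ω ≤ lam.re → ∀ R : X →L[ℂ] X, ResolventAt dom A lam R →
      ‖lam - (ω:ℂ)‖ * ‖R‖ ≤ N₀ := by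
    intro lam hlam R hR
    have h1 := claimA lam hlam
    rw [hFspec lam R hR] at h1
    calc ‖lam - (ω:ℂ)‖ * ‖R‖ = ‖lam - (ω:ℂ)‖ * ‖R‖ := rfl
      _ = ‖(lam - (ω:ℂ)) • R‖ := (norm_smul (lam - (ω:ℂ)) R).symm
      _ ≤ N₀ := h1
  have hsqrt : N₀ ≤ Real.sqrt (4 * N₀ ^ 2 + 1) := by
    have h1 : Real.sqrt (N₀ ^ 2) ≤ Real.sqrt (4 * N₀ ^ 2 + 1) :=
      Real.sqrt_le_sqrt (by nlinarith)
    rwa [Real.sqrt_sq hN₀.le] at h1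
  -- the sector statement
  intro lam hlam
  obtain ⟨hne, harg⟩ := hlam
  have habs0 : 0 < ‖lam - (ω:ℂ)‖ := by
    rw [norm_pos_iff]
    exact sub_ne_zero.mpr hne
  rcases le_or_gt ω lam.re with hre | hre
  · -- right half-plane : direct
    obtain ⟨R, hR, _⟩ := hA lam hre
    refine ⟨R, hR, ?_⟩
    have h1 := claimA' lam hre R hR
    calc ‖R‖ ≤ N₀ / ‖lam - (ω:ℂ)‖ := by
          rw [le_div_iff₀ habs0, mul_comm]; exact h1
      _ ≤ Real.sqrt (4 * N₀ ^ 2 + 1) / ‖lam - (ω:ℂ)‖ := by gcongr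
  · -- left of the line : Neumann series from ω + i·Im λ
    set a : ℝ := ω - lam.re with ha_def
    have ha0 : 0 < a := by simp [ha_def]; linarith
    set s : ℝ := lam.im with hs_def
    -- the sector condition gives 2 N₀ a < |s|
    have hzre : (lam - (ω:ℂ)).re = -a := by
      rw [Complex.sub_re, Complex.ofReal_re, ha_def]; ring
    have hzim : (lam - (ω:ℂ)).im = s := by
      simp [Complex.sub_im, Complex.ofReal_im, hs_def]
    have habs2 : (‖lam - (ω:ℂ)‖)^2 = a^2 + s^2 := by
      rw [Complex.sq_norm, Complex.normSq_apply, hzre, hzim]; ring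
    have hs : 2 * N₀ * a < |s| := by
      have hcos1 : Real.cos (Real.pi - Real.arctan (2 * N₀)) <
          Real.cos |Complex.arg (lam - (ω:ℂ))| := by
        apply Real.cos_lt_cos_of_nonneg_of_le_pi (abs_nonneg _) (by linarith) harg
      rw [Real.cos_abs, Complex.cos_arg (sub_ne_zero.mpr hne), Real.cos_pi_sub,
        Real.cos_arctan] at hcos1
      -- hcos1 : -(1 / sqrt (1 + (2N₀)^2)) < (lam-ω).re / abs (lam-ω)
      rw [hzre] at hcos1
      have hsq : (0:ℝ) < Real.sqrt (1 + (2*N₀)^2) := Real.sqrt_pos.mpr (by positivity)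
      -- cross-multiply : a * sqrt (1+4N₀²) < abs (lam-ω)
      have h2 : a * Real.sqrt (1 + (2*N₀)^2) < ‖lam - (ω:ℂ)‖ := by
        have h3 : a / ‖lam - (ω:ℂ)‖ < 1 / Real.sqrt (1 + (2*N₀)^2) := by
          rw [neg_div] at hcos1; linarith
        rw [div_lt_div_iff₀ habs0 hsq] at h3
        linarith
      have h4 : a^2 * (1 + (2*N₀)^2) < a^2 + s^2 := by
        have h5 : (a * Real.sqrt (1 + (2*N₀)^2))^2 < (‖lam - (ω:ℂ)‖)^2 := by
          apply pow_lt_pow_left₀ h2 (by positivity) (by norm_num)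
        rw [mul_pow, Real.sq_sqrt (by positivity : (0:ℝ) ≤ 1 + (2*N₀)^2), habs2] at h5
        linarith
      nlinarith [sq_abs s, abs_nonneg s, h4]
    have hs0 : (0:ℝ) < |s| := lt_trans (by positivity) hs
    -- the anchor point
    set lam₀ : ℂ := (ω : ℂ) + (s : ℂ) * Complex.I with hlam₀_def
    have hlam₀re : lam₀.re = ω := by simp [hlam₀_def]
    have hlam₀im : lam₀.im = s := by simp [hlam₀_def]
    obtain ⟨R₀, hR₀, hR₀b⟩ := hA lam₀ (le_of_eq hlam₀re.symm)
    have habs₀ : ‖lam₀ - (ω:ℂ)‖ = |s| := by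
      have he : lam₀ - (ω:ℂ) = (s:ℂ) * Complex.I := by rw [hlam₀_def]; ring
      rw [he, norm_mul, Complex.norm_I, Complex.norm_real, Real.norm_eq_abs, mul_one]
    have hR₀n : ‖R₀‖ ≤ N₀ / |s| := by
      have h1 := claimA' lam₀ (le_of_eq hlam₀re.symm) R₀ hR₀
      rw [habs₀] at h1
      rw [le_div_iff₀ hs0, mul_comm]; exact h1
    -- the Neumann step
    have hcval : lam - lam₀ = ((-a : ℝ) : ℂ) := by
      apply Complex.ext
      · simp [hlam₀_def, ha_def]
      · simp [hlam₀_def, hs_def]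
    have hcn : ‖lam - lam₀‖ = a := by
      rw [hcval, Complex.norm_real, Real.norm_eq_abs, abs_neg, abs_of_pos ha0]
    have hsmall : ‖lam - lam₀‖ * ‖R₀‖ < 1 := by
      rw [hcn]
      calc a * ‖R₀‖ ≤ a * (N₀ / |s|) :=
            mul_le_mul_of_nonneg_left hR₀n ha0.le
        _ = a * N₀ / |s| := by ring
        _ < 1 := by rw [div_lt_one hs0]; nlinarith
    obtain ⟨hRS, hSb⟩ := hR₀.neumann (lam - lam₀) hsmall
    rw [show lam₀ + (lam - lam₀) = lam from by ring] at hRS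
    refine ⟨_, hRS, ?_⟩
    have hden : (0:ℝ) < 1 - ‖lam - lam₀‖ * ‖R₀‖ := by linarith
    have hden' : (0:ℝ) < 1 - a * (N₀ / |s|) := by
      have h6 : a * (N₀ / |s|) < 1 := by
        rw [show a * (N₀ / |s|) = a * N₀ / |s| by ring, div_lt_one hs0]
        nlinarith
      linarith
    calc ‖R₀ * Ring.inverse (1 + (lam - lam₀) • R₀)‖
        ≤ ‖R₀‖ / (1 - ‖lam - lam₀‖ * ‖R₀‖) := hSb
      _ ≤ (N₀ / |s|) / (1 - a * (N₀ / |s|)) := by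
          refine div_le_div₀ (by positivity) hR₀n hden' ?_
          rw [hcn]
          nlinarith [mul_le_mul_of_nonneg_left hR₀n ha0.le]
      _ = N₀ / (|s| - a * N₀) := by
          rw [div_div]
          congr 1
          field_simp
      _ ≤ Real.sqrt (4 * N₀ ^ 2 + 1) / ‖lam - (ω:ℂ)‖ := by
          have hd1 : (0:ℝ) < |s| - a * N₀ := by nlinarith
          rw [div_le_div_iff₀ hd1 habs0]
          have habs' : ‖lam - (ω:ℂ)‖ = Real.sqrt (a^2 + s^2) := by
            rw [← Real.sqrt_sq (norm_nonneg (lam - (ω:ℂ))), habs2]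
          rw [habs']
          have lhs_eq : N₀ * Real.sqrt (a^2 + s^2) = Real.sqrt (N₀^2 * (a^2 + s^2)) := by
            rw [Real.sqrt_mul (by positivity) _, Real.sqrt_sq hN₀.le]
          have rhs_eq : Real.sqrt (4 * N₀ ^ 2 + 1) * (|s| - a * N₀) =
              Real.sqrt ((4 * N₀ ^ 2 + 1) * (|s| - a * N₀)^2) := by
            rw [Real.sqrt_mul (by positivity) _, Real.sqrt_sq hd1.le]
          rw [lhs_eq, rhs_eq]
          apply Real.sqrt_le_sqrt
          have hs2 : s^2 = |s|^2 := (sq_abs s).symm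
          have hkey1 : (0:ℝ) ≤ (3 * N₀^2 + 1) * |s| - 2 * N₀^3 * a := by
            nlinarith [mul_le_mul_of_nonneg_left hs.le (sq_nonneg N₀)]
          have hkey : (0:ℝ) ≤ (|s| - 2 * N₀ * a) * ((3 * N₀^2 + 1) * |s| - 2 * N₀^3 * a) :=
            mul_nonneg (by nlinarith) hkey1
          nlinarith [hkey, hs2]
end

section
/- Let {T(t)}_{t≥0} be a strongly continuous semigroup on a Banach space X with generator A satisfying ‖T(t)‖ ≤ L e^{ωt} for all t ≥ 0. Then for μ > ω, b > 0, and t > 0: ∫_{−b}^{b} e^{ist} R(μ + is, A) ds = ∫₀^∞ (2 sin(b(t − ξ))/(t − ξ)) e^{−μξ} T(ξ) dξ, where the integrand at ξ = t is interpreted as 2b e^{−μt}T(t). -/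
open MeasureTheory

set_option maxHeartbeats 1000000 in
lemma aux_sint {b : ℝ} (hb : 0 < b) {c : ℝ} (hc : c ≠ 0) :
    (∫ s in Set.Ioc (-b) b, Complex.exp (Complex.I * s * c)) =
      ((2 * Real.sin (b * c) / c : ℝ) : ℂ) := by
  have hI : (Complex.I * (c : ℂ)) ≠ 0 := by
    simp [Complex.I_ne_zero, Complex.ofReal_eq_zero, hc]
  have h1 : (∫ s in Set.Ioc (-b) b, Complex.exp (Complex.I * s * c)) =
      ∫ s in (-b)..b, Complex.exp ((Complex.I * c) * s) := by
    rw [intervalIntegral.integral_of_le (by linarith)]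
    congr 1; ext s; ring_nf
  rw [h1, integral_exp_mul_complex hI]
  push_cast
  rw [Complex.sin]
  have e1 : Complex.I * (c:ℂ) * b = ((b:ℂ)*c) * Complex.I := by ring
  have e2 : Complex.I * (c:ℂ) * (-b) = -(((b:ℂ)*c)) * Complex.I := by ring
  rw [e1, e2]
  have hc' : (c : ℂ) ≠ 0 := Complex.ofReal_ne_zero.mpr hc
  field_simp
  ring_nf
  rw [Complex.I_sq]
  ring

set_option maxHeartbeats 1000000 in
/-- Convolution representation of `∫_{−b}^{b} e^{ist} R(μ+is,A) ds` for a strongly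
continuous semigroup `T` with `‖T(t)‖ ≤ L e^{ωt}`, where the resolvent is the Laplace
transform of the semigroup: for `μ > ω`, `b > 0`, `t > 0`,
`∫_{−b}^{b} e^{ist} R(μ+is) ds = ∫₀^∞ (2 sin(b(t−ξ))/(t−ξ)) e^{−μξ} T(ξ) dξ`
(the integrand at `ξ = t` being `2b e^{−μt} T(t)`). -/
theorem resolvent_segment_integral_as_convolution
    {X : Type*} [NormedAddCommGroup X] [NormedSpace ℂ X] [CompleteSpace X]
    (T : ℝ → X →L[ℂ] X) (L ω : ℝ)
    (hT0 : T 0 = 1)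
    (hTsem : ∀ s t : ℝ, 0 ≤ s → 0 ≤ t → T (s + t) = T s * T t)
    (hTcont : ∀ x : X, ContinuousOn (fun t => T t x) (Set.Ici 0))
    (hTbound : ∀ t : ℝ, 0 ≤ t → ‖T t‖ ≤ L * Real.exp (ω * t))
    (R : ℂ → X →L[ℂ] X)
    (hR : ∀ lam : ℂ, ω < lam.re → ∀ x : X,
      R lam x = ∫ ξ in Set.Ioi (0 : ℝ), Complex.exp (-lam * (ξ : ℂ)) • T ξ x) :
    ∀ μ : ℝ, ω < μ → ∀ b : ℝ, 0 < b → ∀ t : ℝ, 0 < t → ∀ x : X,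
      (∫ s in (-b)..b,
          Complex.exp (Complex.I * (s : ℂ) * (t : ℂ)) • R ((μ : ℂ) + Complex.I * s) x) =
        ∫ ξ in Set.Ioi (0 : ℝ),
          (((if ξ = t then 2 * b else 2 * Real.sin (b * (t - ξ)) / (t - ξ)) : ℝ) : ℂ) •
            (Complex.exp (-(μ : ℂ) * (ξ : ℂ)) • T ξ x) := by
  intro μ hμ b hb t ht x
  have hle : (-b : ℝ) ≤ b := by linarith
  -- step 1 : rewrite the integrand of the s-integral
  have step1 : ∀ s : ℝ, Complex.exp (Complex.I * (s:ℂ) * (t:ℂ)) • R ((μ:ℂ) + Complex.I * s) x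
      = ∫ ξ in Set.Ioi (0:ℝ),
          Complex.exp (Complex.I * (s:ℂ) * ((t:ℂ) - (ξ:ℂ)) - (μ:ℂ) * ξ) • T ξ x := by
    intro s
    have hre : ω < ((μ:ℂ) + Complex.I * s).re := by simp [hμ]
    rw [hR _ hre x, ← integral_smul]
    refine integral_congr_ae (Filter.Eventually.of_forall fun ξ => ?_)
    simp only [smul_smul, ← Complex.exp_add]
    congr 2
    ring
  -- integrability on the product
  have hTx : ContinuousOn (fun p : ℝ × ℝ => T p.2 x) ((Set.Ioc (-b) b) ×ˢ Set.Ioi 0) :=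
    (hTcont x).comp continuous_snd.continuousOn (fun p hp => Set.mem_Ici.mpr (le_of_lt hp.2))
  have hint : Integrable
      (Function.uncurry fun (s ξ : ℝ) =>
        Complex.exp (Complex.I * (s:ℂ) * ((t:ℂ) - (ξ:ℂ)) - (μ:ℂ) * ξ) • T ξ x)
      ((volume.restrict (Set.Ioc (-b) b)).prod (volume.restrict (Set.Ioi (0:ℝ)))) := by
    rw [Measure.prod_restrict]
    have hmeas : AEStronglyMeasurable
        (Function.uncurry fun (s ξ : ℝ) =>
          Complex.exp (Complex.I * (s:ℂ) * ((t:ℂ) - (ξ:ℂ)) - (μ:ℂ) * ξ) • T ξ x)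
        ((volume.prod volume).restrict ((Set.Ioc (-b) b) ×ˢ Set.Ioi (0:ℝ))) := by
      apply AEStronglyMeasurable.smul
      · exact (Continuous.aestronglyMeasurable (by fun_prop))
      · exact hTx.aestronglyMeasurable (measurableSet_Ioc.prod measurableSet_Ioi)
    have hg : Integrable (fun p : ℝ × ℝ => (L * ‖x‖) * Real.exp ((ω - μ) * p.2))
        ((volume.prod volume).restrict ((Set.Ioc (-b) b) ×ˢ Set.Ioi (0:ℝ))) := by
      rw [← Measure.prod_restrict]
      have h1 : Integrable (fun _ : ℝ => (L * ‖x‖)) (volume.restrict (Set.Ioc (-b) b)) :=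
        integrable_const _
      have h2 : Integrable (fun ξ : ℝ => Real.exp ((ω - μ) * ξ))
          (volume.restrict (Set.Ioi (0:ℝ))) := by
        have := exp_neg_integrableOn_Ioi 0 (sub_pos.mpr hμ)
        simp only [neg_sub] at this
        exact this
      exact h1.mul_prod h2
    refine hg.mono' hmeas ?_
    filter_upwards [ae_restrict_mem (measurableSet_Ioc.prod measurableSet_Ioi)] with p hp
    have hp2 : (0:ℝ) < p.2 := hp.2
    have habs : ‖Complex.exp (Complex.I * (p.1:ℂ) * ((t:ℂ) - (p.2:ℂ)) - (μ:ℂ) * p.2)‖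
        = Real.exp (-(μ * p.2)) := by
      rw [Complex.norm_exp]
      congr 1
      simp
    have hnorm : ‖Complex.exp (Complex.I * (p.1:ℂ) * ((t:ℂ) - (p.2:ℂ)) - (μ:ℂ) * p.2) • T p.2 x‖
        = Real.exp (-(μ * p.2)) * ‖T p.2 x‖ := by
      rw [norm_smul, habs]
    have hTb : ‖T p.2 x‖ ≤ (L * Real.exp (ω * p.2)) * ‖x‖ := by
      calc ‖T p.2 x‖ ≤ ‖T p.2‖ * ‖x‖ := (T p.2).le_opNorm x
        _ ≤ (L * Real.exp (ω * p.2)) * ‖x‖ := by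
            gcongr; exact hTbound p.2 hp2.le
    calc ‖Function.uncurry (fun (s ξ : ℝ) =>
            Complex.exp (Complex.I * (s:ℂ) * ((t:ℂ) - (ξ:ℂ)) - (μ:ℂ) * ξ) • T ξ x) p‖
        = Real.exp (-(μ * p.2)) * ‖T p.2 x‖ := hnorm
      _ ≤ Real.exp (-(μ * p.2)) * ((L * Real.exp (ω * p.2)) * ‖x‖) := by gcongr
      _ = (L * ‖x‖) * Real.exp ((ω - μ) * p.2) := by
          rw [show (ω - μ) * p.2 = ω * p.2 + -(μ * p.2) by ring, Real.exp_add]; ring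
  -- main chain
  rw [intervalIntegral.integral_of_le hle,
    integral_congr_ae (Filter.Eventually.of_forall step1),
    integral_integral_swap hint]
  refine integral_congr_ae ?_
  have hne : ∀ᵐ ξ ∂(volume.restrict (Set.Ioi (0:ℝ))), ξ ≠ t := by
    refine ae_restrict_of_ae ?_
    rw [ae_iff]
    have : {a : ℝ | ¬ a ≠ t} = {t} := by ext a; simp
    rw [this]
    exact measure_singleton t
  filter_upwards [hne] with ξ hξ
  have hc : t - ξ ≠ 0 := sub_ne_zero.mpr (Ne.symm hξ)
  calc (∫ s in Set.Ioc (-b) b,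
          Complex.exp (Complex.I * (s:ℂ) * ((t:ℂ) - (ξ:ℂ)) - (μ:ℂ) * ξ) • T ξ x)
      = ∫ s in Set.Ioc (-b) b,
          Complex.exp (Complex.I * (s:ℂ) * ((t - ξ : ℝ) : ℂ)) •
            (Complex.exp (-(μ:ℂ) * ξ) • T ξ x) := by
        refine integral_congr_ae (Filter.Eventually.of_forall fun s => ?_)
        simp only [smul_smul, ← Complex.exp_add]
        congr 2
        push_cast
        ring
    _ = (∫ s in Set.Ioc (-b) b, Complex.exp (Complex.I * (s:ℂ) * ((t - ξ : ℝ) : ℂ))) •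
          (Complex.exp (-(μ:ℂ) * ξ) • T ξ x) := integral_smul_const _ _
    _ = (((2 * Real.sin (b * (t - ξ)) / (t - ξ) : ℝ)) : ℂ) •
          (Complex.exp (-(μ:ℂ) * ξ) • T ξ x) := by rw [aux_sint hb hc]
    _ = (((if ξ = t then 2 * b else 2 * Real.sin (b * (t - ξ)) / (t - ξ) : ℝ)) : ℂ) •
          (Complex.exp (-(μ:ℂ) * ξ) • T ξ x) := by rw [if_neg hξ]
end
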